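/- arXiv:1909.11040 — 4 statements merged into one kernel-verified Lean document; each statement's English description precedes it below -/
import Mathlib

section
/- Let β > 0, η > 0, F > 0 be real numbers. There exists a unique x̄ ∈ (0,∞) such that η·exp(−βx̄)/(1+exp(−βx̄)) = F·(1−exp(−x̄)); moreover η·exp(−βx)/(1+exp(−βx)) > F·(1−exp(−x)) for all x ∈ [0, x̄) and η·exp(−βx)/(1+exp(−βx)) < F·(1−exp(−x)) for all x ∈ (x̄,∞). -/
open Real Set

private lemma strictAnti_aux (β η F : ℝ) (hβ : 0 < β) (hη : 0 < η) (hF : 0 < F) :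
    StrictAnti (fun x : ℝ =>
      η * Real.exp (-β * x) / (1 + Real.exp (-β * x)) - F * (1 - Real.exp (-x))) := by
  intro x y hxy
  simp only
  have hu : Real.exp (-β * y) < Real.exp (-β * x) := by
    apply Real.exp_lt_exp.2; nlinarith
  have hux : 0 < Real.exp (-β * x) := Real.exp_pos _
  have huy : 0 < Real.exp (-β * y) := Real.exp_pos _
  have h1 : η * Real.exp (-β * y) / (1 + Real.exp (-β * y)) <
      η * Real.exp (-β * x) / (1 + Real.exp (-β * x)) := by
    rw [div_lt_div_iff₀ (by linarith) (by linarith)]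
    nlinarith
  have h2 : Real.exp (-y) < Real.exp (-x) := Real.exp_lt_exp.2 (by linarith)
  nlinarith

/-- For β > 0, η > 0, F > 0, there is a unique `x̄ ∈ (0,∞)` with
`η·exp(−βx̄)/(1+exp(−βx̄)) = F·(1−exp(−x̄))`; moreover the inflow strictly exceeds the
outflow on `[0, x̄)` and is strictly below it on `(x̄, ∞)`. -/
theorem stmt1 (β η F : ℝ) (hβ : 0 < β) (hη : 0 < η) (hF : 0 < F) :
    ∃ xb : ℝ, 0 < xb ∧
      η * Real.exp (-β * xb) / (1 + Real.exp (-β * xb)) = F * (1 - Real.exp (-xb)) ∧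
      (∀ y : ℝ, 0 < y →
        η * Real.exp (-β * y) / (1 + Real.exp (-β * y)) = F * (1 - Real.exp (-y)) → y = xb) ∧
      (∀ x : ℝ, 0 ≤ x → x < xb →
        η * Real.exp (-β * x) / (1 + Real.exp (-β * x)) > F * (1 - Real.exp (-x))) ∧
      (∀ x : ℝ, xb < x →
        η * Real.exp (-β * x) / (1 + Real.exp (-β * x)) < F * (1 - Real.exp (-x))) := by
  set f : ℝ → ℝ := fun x =>
    η * Real.exp (-β * x) / (1 + Real.exp (-β * x)) - F * (1 - Real.exp (-x)) with hf
  have hanti : StrictAnti f := strictAnti_aux β η F hβ hη hF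
  have hcont : Continuous f := by
    apply Continuous.sub
    · apply Continuous.div (by continuity) (by continuity)
      intro x
      have := Real.exp_pos (-β * x)
      linarith
    · continuity
  have hf0 : 0 < f 0 := by
    simp only [hf, mul_zero, neg_zero, Real.exp_zero]
    norm_num
    positivity
  -- find b with f b < 0
  obtain ⟨b, hb0, hbneg⟩ : ∃ b : ℝ, 0 < b ∧ f b < 0 := by
    refine ⟨max (Real.log 2) (Real.log (2 * η / F) / β) + 1, ?_, ?_⟩
    · have := le_max_left (Real.log 2) (Real.log (2 * η / F) / β)
      have := Real.log_nonneg (show (1:ℝ) ≤ 2 by norm_num)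
      linarith
    · set b := max (Real.log 2) (Real.log (2 * η / F) / β) + 1 with hbdef
      have hb1 : Real.log 2 < b := by
        have := le_max_left (Real.log 2) (Real.log (2 * η / F) / β)
        rw [hbdef]; linarith
      have hb2 : Real.log (2 * η / F) / β < b := by
        have := le_max_right (Real.log 2) (Real.log (2 * η / F) / β)
        rw [hbdef]; linarith
      have hexpb : Real.exp (-b) < 1 / 2 := by
        have h1 : Real.exp (-b) < Real.exp (-Real.log 2) := Real.exp_lt_exp.2 (by linarith)
        have h2 : Real.exp (-Real.log 2) = 1 / 2 := by
          rw [Real.exp_neg, Real.exp_log (by norm_num)]; norm_num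
        linarith
      have hout : F / 2 < F * (1 - Real.exp (-b)) := by nlinarith
      have hin : η * Real.exp (-β * b) / (1 + Real.exp (-β * b)) < F / 2 := by
        have hE : 0 < Real.exp (-β * b) := Real.exp_pos _
        have h1 : η * Real.exp (-β * b) / (1 + Real.exp (-β * b)) ≤ η * Real.exp (-β * b) := by
          rw [div_le_iff₀ (by linarith)]
          nlinarith [mul_pos (mul_pos hη hE) hE]
        have h2 : η * Real.exp (-β * b) < F / 2 := by
          have hlt : Real.log (2 * η / F) < β * b := by
            rw [div_lt_iff₀ hβ] at hb2; linarith [mul_comm β b]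
          have hgt : 2 * η / F < Real.exp (β * b) := by
            have := Real.exp_lt_exp.2 hlt
            rwa [Real.exp_log (by positivity)] at this
          have hp : 0 < Real.exp (β * b) := Real.exp_pos _
          rw [neg_mul, Real.exp_neg]
          rw [div_lt_iff₀ hF] at hgt
          rw [inv_eq_one_div, mul_one_div, div_lt_div_iff₀ hp (by norm_num : (0:ℝ) < 2)]
          nlinarith
        linarith
      simp only [hf]
      linarith
  -- IVT
  have hIVT : Set.Icc (f b) (f 0) ⊆ f '' Set.Icc 0 b :=
    intermediate_value_Icc' hb0.le hcont.continuousOn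
  obtain ⟨xb, hxbmem, hxb⟩ := hIVT ⟨hbneg.le, hf0.le⟩
  have hxbpos : 0 < xb := by
    rcases lt_or_eq_of_le hxbmem.1 with h | h
    · exact h
    · exfalso; rw [← h] at hxb; linarith
  have hsign_lt : ∀ x, x < xb → 0 < f x := fun x hx => by
    have := hanti hx; rw [hxb] at this; linarith
  have hsign_gt : ∀ x, xb < x → f x < 0 := fun x hx => by
    have := hanti hx; rw [hxb] at this; linarith
  refine ⟨xb, hxbpos, by have := hxb; simp only [hf] at this; linarith, ?_, ?_, ?_⟩
  · intro y hy hyeq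
    by_contra hne
    rcases lt_or_gt_of_ne hne with h | h
    · have := hsign_lt y h; simp only [hf] at this; linarith
    · have := hsign_gt y h; simp only [hf] at this; linarith
  · intro x _ hx
    have := hsign_lt x hx; simp only [hf] at this; linarith
  · intro x hx
    have := hsign_gt x hx; simp only [hf] at this; linarith
end

section
/- For every mode s ∈ {1,2,3,4}, every k ∈ {1,2}, and every x = (x₁,x₂) with x₁ ≥ 0 and x₂ ≥ 0, if x_k < x̄_k then the k-th component of the vector field is strictly positive: G_k(s,x) = μ_k(s,x) − F_k·(1−exp(−x_k)) > 0. -/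
open Real Set MeasureTheory Filter

/-- Inflow function `μ_k(s, x)` for modes `s ∈ {1,2,3,4}` (indexed `0..3`) and links
`k ∈ {1,2}` (indexed `0..1`). -/
noncomputable def mu (β η : ℝ) (s : Fin 4) (k : Fin 2) (x : ℝ × ℝ) : ℝ :=
  match s.val, k.val with
  | 0, 0 => η * Real.exp (-β * x.1) / (Real.exp (-β * x.1) + Real.exp (-β * x.2))
  | 0, _ => η * Real.exp (-β * x.2) / (Real.exp (-β * x.1) + Real.exp (-β * x.2))
  | 1, 0 => η / (1 + Real.exp (-β * x.2))
  | 1, _ => η * Real.exp (-β * x.2) / (1 + Real.exp (-β * x.2))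
  | 2, 0 => η * Real.exp (-β * x.1) / (Real.exp (-β * x.1) + 1)
  | 2, _ => η / (Real.exp (-β * x.1) + 1)
  | _, _ => η / 2

/-- Outflow (sending) function `f_k(y) = F_k (1 - e^{-y})` of link `k`. -/
noncomputable def fOut (F : Fin 2 → ℝ) (k : Fin 2) (y : ℝ) : ℝ :=
  F k * (1 - Real.exp (-y))

/-- The mode-`s` vector field `G(s,x) = (μ₁(s,x) − f₁(x₁), μ₂(s,x) − f₂(x₂))`. -/
noncomputable def Gvec (β η : ℝ) (F : Fin 2 → ℝ) (s : Fin 4) (x : ℝ × ℝ) : ℝ × ℝ :=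
  (mu β η s 0 x - fOut F 0 x.1, mu β η s 1 x - fOut F 1 x.2)

/-- The `k`-th coordinate of `x ∈ ℝ²`. -/
def coord (x : ℝ × ℝ) (k : Fin 2) : ℝ := if k = 0 then x.1 else x.2

/-- below the threshold `x̄_k` (the unique nonnegative solution of
`η·exp(−βx)/(1+exp(−βx)) = F_k (1−exp(−x))`), the `k`-th component of the vector field
is strictly positive, in every mode. -/
theorem stmt3 (β η : ℝ) (F : Fin 2 → ℝ) (hβ : 0 < β) (hη : 0 < η)
    (hF : ∀ k, 0 < F k) (xb : Fin 2 → ℝ)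
    (hxb_nonneg : ∀ k, 0 ≤ xb k)
    (hxb_eq : ∀ k, η * Real.exp (-β * xb k) / (1 + Real.exp (-β * xb k)) =
      F k * (1 - Real.exp (-xb k)))
    (hxb_unique : ∀ k y, 0 ≤ y →
      η * Real.exp (-β * y) / (1 + Real.exp (-β * y)) = F k * (1 - Real.exp (-y)) → y = xb k)
    (s : Fin 4) (k : Fin 2) (x : ℝ × ℝ) (hx1 : 0 ≤ x.1) (hx2 : 0 ≤ x.2)
    (hxk : coord x k < xb k) :
    mu β η s k x - F k * (1 - Real.exp (-coord x k)) > 0 := by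
  set y := coord x k with hy
  -- g(y) = η e^{-βy}/(1+e^{-βy}) is strictly decreasing; compare at y < xb k
  have ha0 : (0:ℝ) < Real.exp (-β * x.1) := Real.exp_pos _
  have hb0 : (0:ℝ) < Real.exp (-β * x.2) := Real.exp_pos _
  have ha1 : Real.exp (-β * x.1) ≤ 1 := by
    rw [Real.exp_le_one_iff]; nlinarith
  have hb1 : Real.exp (-β * x.2) ≤ 1 := by
    rw [Real.exp_le_one_iff]; nlinarith
  -- Step 1: mu ≥ η e^{-βy}/(1+e^{-βy})
  have hmu : η * Real.exp (-β * y) / (1 + Real.exp (-β * y)) ≤ mu β η s k x := by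
    have hc0 : (0:ℝ) < Real.exp (-β * y) := Real.exp_pos _
    have hy0 : 0 ≤ y := by rw [hy]; unfold coord; split <;> assumption
    have hc1 : Real.exp (-β * y) ≤ 1 := by
      rw [Real.exp_le_one_iff]; nlinarith
    fin_cases s <;> fin_cases k <;>
      simp only [mu, coord, hy, Fin.zero_eta, Fin.mk_one, if_true, if_false, Fin.isValue,
        reduceIte, one_ne_zero] <;>
      rw [div_le_div_iff₀ (by positivity) (by positivity)] <;>
      nlinarith [mul_pos ha0 hb0, mul_pos hη hc0, mul_pos hη ha0, mul_pos hη hb0]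
  -- Step 2: η e^{-βy}/(1+e^{-βy}) > F k (1 - e^{-y})
  have hkey : F k * (1 - Real.exp (-y)) < η * Real.exp (-β * y) / (1 + Real.exp (-β * y)) := by
    have h1 : Real.exp (-β * xb k) < Real.exp (-β * y) := by
      apply Real.exp_lt_exp.mpr; nlinarith
    have h2 : Real.exp (-xb k) < Real.exp (-y) := by
      apply Real.exp_lt_exp.mpr; linarith
    have hfk := hF k
    have step1 : F k * (1 - Real.exp (-y)) < F k * (1 - Real.exp (-xb k)) := by
      apply mul_lt_mul_of_pos_left _ hfk; linarith
    have step2 : η * Real.exp (-β * xb k) / (1 + Real.exp (-β * xb k)) <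
        η * Real.exp (-β * y) / (1 + Real.exp (-β * y)) := by
      have hp1 : (0:ℝ) < Real.exp (-β * xb k) := Real.exp_pos _
      have hp2 : (0:ℝ) < Real.exp (-β * y) := Real.exp_pos _
      rw [div_lt_div_iff₀ (by positivity) (by positivity)]
      nlinarith [mul_pos hp1 hp2]
    calc F k * (1 - Real.exp (-y)) < F k * (1 - Real.exp (-xb k)) := step1
      _ = η * Real.exp (-β * xb k) / (1 + Real.exp (-β * xb k)) := (hxb_eq k).symm
      _ < η * Real.exp (-β * y) / (1 + Real.exp (-β * y)) := step2
  linarith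
end

section
/- Let σ : [0,∞) → {1,2,3,4} be any measurable switching signal and let X : [0,∞) → ℝ² be continuous with X(t) = X(0) + ∫₀ᵗ G(σ(τ), X(τ)) dτ for all t ≥ 0 and X(t) ∈ [0,∞)² for all t ≥ 0. If X(0) ∈ M := [x̄₁,∞)×[x̄₂,∞), then X(t) ∈ M for all t ≥ 0; that is, M is positively invariant for the switched dynamics. -/
/-!
Each coordinate is handled on its own. For a nonnegative state, the inflow that any mode sends
into link `k` is at least `minInflow β η x_k = η e^{-β x_k} / (1 + e^{-β x_k})`, which decreases
in `x_k`, while the outflow `f_k(x_k)` increases; the two agree at `x̄_k`, so the `k`-th component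
of every `G(s, ·)` is nonnegative wherever `x_k ≤ x̄_k`. A continuous solution of the integral
equation therefore cannot drop below `x̄_k`: after the last time it is at least `x̄_k`, its
`k`-th coordinate has a nonnegative integrand and so cannot have decreased.
-/

open Real Set MeasureTheory Filter

section Switched

variable {α ι E F : Type*} [TopologicalSpace α] [MeasurableSpace α] [OpensMeasurableSpace α]
  [T2Space α] {μ : Measure α} [IsFiniteMeasureOnCompacts μ]
  [Finite ι] [MeasurableSpace ι] [MeasurableSingletonClass ι]
  [TopologicalSpace E] [MeasurableSpace E] [BorelSpace E]
  [NormedAddCommGroup F] [MeasurableSpace F] [BorelSpace F] [SecondCountableTopology F]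

theorem IsCompact.integrableOn_switched {K : Set α} (hK : IsCompact K) {σ : α → ι}
    (hσ : Measurable σ) {φ : ι → E → F} (hφ : ∀ s, Continuous (φ s)) {X : α → E}
    (hX : ContinuousOn X K) : IntegrableOn (fun τ => φ (σ τ) (X τ)) K μ := by
  have hΦ : Measurable fun p : E × ι => φ p.2 p.1 :=
    measurable_from_prod_countable_left fun s => (hφ s).measurable
  have hmeas : AEStronglyMeasurable (fun τ => φ (σ τ) (X τ)) (μ.restrict K) :=
    (hΦ.comp_aemeasurable ((hX.aemeasurable hK.measurableSet).prodMk
      hσ.aemeasurable)).aestronglyMeasurable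
  choose C hC using fun s => (hK.image_of_continuousOn hX).exists_bound_of_continuousOn
    (hφ s).continuousOn
  obtain ⟨M, hM⟩ := Finite.exists_le C
  refine IntegrableOn.of_bound hK.measure_lt_top hmeas M ?_
  filter_upwards [ae_restrict_mem hK.measurableSet] with τ hτ
  exact (hC (σ τ) _ (mem_image_of_mem X hτ)).trans (hM _)

end Switched

theorem le_of_eq_add_intervalIntegral {u g : ℝ → ℝ} {a c : ℝ} (hu : ContinuousOn u (Ici a))
    (hg : ∀ t, a ≤ t → IntervalIntegrable g volume a t)
    (hug : ∀ t, a ≤ t → u t = u a + ∫ τ in a..t, g τ)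
    (hg_nonneg : ∀ τ, a ≤ τ → u τ < c → 0 ≤ g τ) (hc : c ≤ u a) {t : ℝ} (ht : a ≤ t) :
    c ≤ u t := by
  by_contra! hut
  set S := Icc a t ∩ u ⁻¹' Ici c
  have hSa : a ∈ S := ⟨⟨le_rfl, ht⟩, hc⟩
  have hS_bdd : BddAbove S := ⟨t, fun τ hτ => hτ.1.2⟩
  have hS_closed : IsClosed S :=
    (hu.mono Icc_subset_Ici_self).preimage_isClosed_of_isClosed isClosed_Icc isClosed_Ici
  -- the last time before `t` at which `u` is still above `c`
  obtain ⟨⟨hat₀, ht₀t⟩, hct₀⟩ : sSup S ∈ S := hS_closed.csSup_mem ⟨a, hSa⟩ hS_bdd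
  set t₀ := sSup S
  have hg_after : ∀ τ ∈ Ioc t₀ t, 0 ≤ g τ := fun τ hτ =>
    hg_nonneg τ (hat₀.trans hτ.1.le) <| not_le.1 fun hcτ =>
      hτ.1.not_ge (le_csSup hS_bdd ⟨⟨hat₀.trans hτ.1.le, hτ.2⟩, hcτ⟩)
  have hdiff : u t - u t₀ = ∫ τ in t₀..t, g τ := by
    rw [hug t ht, hug t₀ hat₀, add_sub_add_left_eq_sub,
      intervalIntegral.integral_interval_sub_left (hg t ht) (hg t₀ hat₀)]
  have hint : 0 ≤ ∫ τ in t₀..t, g τ := by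
    rw [intervalIntegral.integral_of_le ht₀t]
    exact setIntegral_nonneg measurableSet_Ioc hg_after
  linarith [show c ≤ u t₀ from hct₀]

theorem ContinuousLinearMap.le_apply_of_eq_add_intervalIntegral {E : Type*}
    [NormedAddCommGroup E] [NormedSpace ℝ E] [CompleteSpace E] (L : E →L[ℝ] ℝ)
    {X V : ℝ → E} {a c : ℝ} (hX : ContinuousOn X (Ici a))
    (hV : ∀ t, a ≤ t → IntervalIntegrable V volume a t)
    (hXV : ∀ t, a ≤ t → X t = X a + ∫ τ in a..t, V τ)
    (hV_inward : ∀ τ, a ≤ τ → L (X τ) < c → 0 ≤ L (V τ)) (hc : c ≤ L (X a)) {t : ℝ}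
    (ht : a ≤ t) : c ≤ L (X t) :=
  le_of_eq_add_intervalIntegral (u := fun τ => L (X τ)) (L.continuous.comp_continuousOn hX)
    (fun t ht => ⟨L.integrable_comp (hV t ht).1, L.integrable_comp (hV t ht).2⟩)
    (fun t ht => by rw [hXV t ht, map_add, L.intervalIntegral_comp_comm (hV t ht)])
    hV_inward hc ht

noncomputable def minInflow (β η y : ℝ) : ℝ :=
  η * exp (-β * y) / (1 + exp (-β * y))

theorem minInflow_antitone {β η : ℝ} (hβ : 0 ≤ β) (hη : 0 ≤ η) : Antitone (minInflow β η) := by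
  intro y z hyz
  have hexp : exp (-β * z) ≤ exp (-β * y) := exp_le_exp.2 (by nlinarith)
  unfold minInflow
  rw [div_le_div_iff₀ (by positivity) (by positivity)]
  nlinarith [mul_nonneg hη (sub_nonneg.2 hexp)]

theorem fOut_monotone {F : Fin 2 → ℝ} {k : Fin 2} (hF : 0 ≤ F k) : Monotone (fOut F k) :=
  fun _ _ h => mul_le_mul_of_nonneg_left (sub_le_sub_left (exp_le_exp.2 (neg_le_neg h)) 1) hF

theorem fOut_le_minInflow {β η : ℝ} {F : Fin 2 → ℝ} {k : Fin 2} (hβ : 0 ≤ β) (hη : 0 ≤ η)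
    (hF : 0 ≤ F k) {xb y : ℝ} (hxb : minInflow β η xb = fOut F k xb) (hy : y ≤ xb) :
    fOut F k y ≤ minInflow β η y :=
  calc fOut F k y ≤ fOut F k xb := fOut_monotone hF hy
    _ = minInflow β η xb := hxb.symm
    _ ≤ minInflow β η y := minInflow_antitone hβ hη hy

section Inflow

variable {β η : ℝ} {x : ℝ × ℝ}

theorem minInflow_le_mu_zero (hβ : 0 ≤ β) (hη : 0 ≤ η) (h₁ : 0 ≤ x.1) (h₂ : 0 ≤ x.2)
    (s : Fin 4) : minInflow β η x.1 ≤ mu β η s 0 x := by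
  have ha := exp_pos (-β * x.1)
  have hb := exp_pos (-β * x.2)
  have ha₁ : exp (-β * x.1) ≤ 1 := exp_le_one_iff.2 (by nlinarith)
  have hb₁ : exp (-β * x.2) ≤ 1 := exp_le_one_iff.2 (by nlinarith)
  fin_cases s <;> simp only [mu, minInflow, Fin.val_zero] <;>
    rw [div_le_div_iff₀ (by positivity) (by positivity)] <;>
    nlinarith [mul_nonneg hη ha.le, mul_nonneg (mul_nonneg hη ha.le) (sub_nonneg.2 hb₁),
      mul_nonneg hη (sub_nonneg.2 ha₁), mul_nonneg (mul_nonneg hη ha.le) hb.le,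
      mul_nonneg hη (sub_nonneg.2 (mul_le_one₀ ha₁ hb.le hb₁))]

theorem minInflow_le_mu_one (hβ : 0 ≤ β) (hη : 0 ≤ η) (h₁ : 0 ≤ x.1) (h₂ : 0 ≤ x.2)
    (s : Fin 4) : minInflow β η x.2 ≤ mu β η s 1 x := by
  have ha := exp_pos (-β * x.1)
  have hb := exp_pos (-β * x.2)
  have ha₁ : exp (-β * x.1) ≤ 1 := exp_le_one_iff.2 (by nlinarith)
  have hb₁ : exp (-β * x.2) ≤ 1 := exp_le_one_iff.2 (by nlinarith)
  fin_cases s <;> simp only [mu, minInflow, Fin.val_one] <;>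
    rw [div_le_div_iff₀ (by positivity) (by positivity)] <;>
    nlinarith [mul_nonneg hη hb.le, mul_nonneg (mul_nonneg hη hb.le) (sub_nonneg.2 ha₁),
      mul_nonneg hη (sub_nonneg.2 hb₁), mul_nonneg (mul_nonneg hη hb.le) ha.le,
      mul_nonneg hη (sub_nonneg.2 (mul_le_one₀ ha₁ hb.le hb₁))]

end Inflow

theorem continuous_mu (β η : ℝ) (s : Fin 4) (k : Fin 2) : Continuous (mu β η s k) := by
  fin_cases s <;> fin_cases k <;>
    exact Continuous.div (by fun_prop) (by fun_prop) fun x => by positivity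

theorem continuous_Gvec (β η : ℝ) (F : Fin 2 → ℝ) (s : Fin 4) : Continuous (Gvec β η F s) := by
  unfold Gvec fOut
  have := continuous_mu β η s
  fun_prop

section Field

variable {β η : ℝ} {F : Fin 2 → ℝ} {x : ℝ × ℝ} {xb : ℝ}

theorem Gvec_fst_nonneg (hβ : 0 ≤ β) (hη : 0 ≤ η) (hF : 0 ≤ F 0) (h₁ : 0 ≤ x.1) (h₂ : 0 ≤ x.2)
    (hxb : minInflow β η xb = fOut F 0 xb) (hx : x.1 ≤ xb) (s : Fin 4) :
    0 ≤ (Gvec β η F s x).1 :=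
  sub_nonneg.2 <| (fOut_le_minInflow hβ hη hF hxb hx).trans (minInflow_le_mu_zero hβ hη h₁ h₂ s)

theorem Gvec_snd_nonneg (hβ : 0 ≤ β) (hη : 0 ≤ η) (hF : 0 ≤ F 1) (h₁ : 0 ≤ x.1) (h₂ : 0 ≤ x.2)
    (hxb : minInflow β η xb = fOut F 1 xb) (hx : x.2 ≤ xb) (s : Fin 4) :
    0 ≤ (Gvec β η F s x).2 :=
  sub_nonneg.2 <| (fOut_le_minInflow hβ hη hF hxb hx).trans (minInflow_le_mu_one hβ hη h₁ h₂ s)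

end Field

theorem stmt4_general (β η : ℝ) (F : Fin 2 → ℝ) (hβ : 0 < β) (hη : 0 < η)
    (hF : ∀ k, 0 < F k) (xb : Fin 2 → ℝ)
    (hxb_eq : ∀ k, η * Real.exp (-β * xb k) / (1 + Real.exp (-β * xb k)) =
      F k * (1 - Real.exp (-xb k)))
    (σ : ℝ → Fin 4) (hσ : Measurable σ)
    (X : ℝ → ℝ × ℝ) (hXcont : ContinuousOn X (Set.Ici (0 : ℝ)))
    (hXeq : ∀ t : ℝ, 0 ≤ t → X t = X 0 + ∫ τ in (0 : ℝ)..t, Gvec β η F (σ τ) (X τ))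
    (hXnn : ∀ t : ℝ, 0 ≤ t → X t ∈ Set.Ici (0 : ℝ) ×ˢ Set.Ici (0 : ℝ))
    (hX0 : X 0 ∈ Set.Ici (xb 0) ×ˢ Set.Ici (xb 1)) :
    ∀ t : ℝ, 0 ≤ t → X t ∈ Set.Ici (xb 0) ×ˢ Set.Ici (xb 1) := by
  have hG : ∀ t, 0 ≤ t → IntervalIntegrable (fun τ => Gvec β η F (σ τ) (X τ)) volume 0 t :=
    fun t ht => (isCompact_uIcc.integrableOn_switched hσ (continuous_Gvec β η F)
      (hXcont.mono <| (uIcc_of_le ht).trans_subset Icc_subset_Ici_self)).intervalIntegrable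
  intro t ht
  constructor
  · refine (ContinuousLinearMap.fst ℝ ℝ ℝ).le_apply_of_eq_add_intervalIntegral hXcont hG hXeq
      (fun τ hτ hlt => ?_) hX0.1 ht
    exact Gvec_fst_nonneg hβ.le hη.le (hF 0).le (hXnn τ hτ).1 (hXnn τ hτ).2 (hxb_eq 0) hlt.le _
  · refine (ContinuousLinearMap.snd ℝ ℝ ℝ).le_apply_of_eq_add_intervalIntegral hXcont hG hXeq
      (fun τ hτ hlt => ?_) hX0.2 ht
    exact Gvec_snd_nonneg hβ.le hη.le (hF 1).le (hXnn τ hτ).1 (hXnn τ hτ).2 (hxb_eq 1) hlt.le _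

/-- the set `M = [x̄₁,∞) × [x̄₂,∞)` is positively invariant for the switched
dynamics `Ẋ = G(σ(t), X(t))` (in integral form), with `x̄_k` the unique nonnegative
solution of `η·exp(−βx)/(1+exp(−βx)) = F_k (1−exp(−x))`. -/
theorem stmt4 (β η : ℝ) (F : Fin 2 → ℝ) (hβ : 0 < β) (hη : 0 < η)
    (hF : ∀ k, 0 < F k) (xb : Fin 2 → ℝ)
    (hxb_nonneg : ∀ k, 0 ≤ xb k)
    (hxb_eq : ∀ k, η * Real.exp (-β * xb k) / (1 + Real.exp (-β * xb k)) =
      F k * (1 - Real.exp (-xb k)))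
    (hxb_unique : ∀ k y, 0 ≤ y →
      η * Real.exp (-β * y) / (1 + Real.exp (-β * y)) = F k * (1 - Real.exp (-y)) → y = xb k)
    (σ : ℝ → Fin 4) (hσ : Measurable σ)
    (X : ℝ → ℝ × ℝ) (hXcont : ContinuousOn X (Set.Ici (0 : ℝ)))
    (hXeq : ∀ t : ℝ, 0 ≤ t → X t = X 0 + ∫ τ in (0 : ℝ)..t, Gvec β η F (σ τ) (X τ))
    (hXnn : ∀ t : ℝ, 0 ≤ t → X t ∈ Set.Ici (0 : ℝ) ×ˢ Set.Ici (0 : ℝ))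
    (hX0 : X 0 ∈ Set.Ici (xb 0) ×ˢ Set.Ici (xb 1)) :
    ∀ t : ℝ, 0 ≤ t → X t ∈ Set.Ici (xb 0) ×ˢ Set.Ici (xb 1) :=
  stmt4_general β η F hβ hη hF xb hxb_eq σ hσ X hXcont hXeq hXnn hX0
end

section
/- Let θ = (θ₁,θ₂) ∈ [0,∞)². For every mode s ∈ {1,2,3,4}, every k ∈ {1,2}, and every x = (x₁,x₂) ∈ [0,∞)² with x_k ≥ θ_k and x_{3−k} ≤ θ_{3−k}, the excess drift of link k at x is bounded by its value at θ: μ_k(s,x) − F_k·(1−exp(−x_k)) ≤ μ_k(s,θ) − F_k·(1−exp(−θ_k)). -/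
open Real Set MeasureTheory Filter

private lemma key (η a b a' b' : ℝ) (hη : 0 ≤ η) (ha : 0 < a) (hb : 0 < b)
    (ha' : 0 < a') (hb' : 0 < b') (h : a * b' ≤ a' * b) :
    η * a / (a + b) ≤ η * a' / (a' + b') := by
  rw [div_le_div_iff₀ (by linarith) (by linarith)]
  nlinarith [mul_le_mul_of_nonneg_left h hη]


private lemma exp_frac_mono (η u v u' v' : ℝ) (hη : 0 ≤ η)
    (h : u + v' ≤ u' + v) :
    η * Real.exp u / (Real.exp u + Real.exp v) ≤
      η * Real.exp u' / (Real.exp u' + Real.exp v') := by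
  apply key _ _ _ _ _ hη (Real.exp_pos _) (Real.exp_pos _) (Real.exp_pos _) (Real.exp_pos _)
  rw [← Real.exp_add, ← Real.exp_add]
  exact Real.exp_le_exp.mpr (by linarith)

private lemma mu_mono0 (β η : ℝ) (hβ : 0 < β) (hη : 0 < η) (s : Fin 4) (x θ : ℝ × ℝ)
    (h1 : θ.1 ≤ x.1) (h2 : x.2 ≤ θ.2) : mu β η s 0 x ≤ mu β η s 0 θ := by
  have hb1 := mul_le_mul_of_nonneg_left h1 hβ.le
  have hb2 := mul_le_mul_of_nonneg_left h2 hβ.le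
  have eθ2 : η / (1 + Real.exp (-β * θ.2)) = η * Real.exp 0 / (Real.exp 0 + Real.exp (-β * θ.2)) := by simp
  have ex2 : η / (1 + Real.exp (-β * x.2)) = η * Real.exp 0 / (Real.exp 0 + Real.exp (-β * x.2)) := by simp
  have ex1 : Real.exp (-β * x.1) + 1 = Real.exp (-β * x.1) + Real.exp 0 := by simp
  have eθ1 : Real.exp (-β * θ.1) + 1 = Real.exp (-β * θ.1) + Real.exp 0 := by simp
  fin_cases s <;> simp only [mu]
  · exact exp_frac_mono _ _ _ _ _ hη.le (by linarith)
  · rw [ex2, eθ2]; exact exp_frac_mono _ _ _ _ _ hη.le (by linarith)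
  · rw [ex1, eθ1]; exact exp_frac_mono _ _ _ _ _ hη.le (by linarith)
  · exact le_refl _

private lemma mu_mono1 (β η : ℝ) (hβ : 0 < β) (hη : 0 < η) (s : Fin 4) (x θ : ℝ × ℝ)
    (h1 : x.1 ≤ θ.1) (h2 : θ.2 ≤ x.2) : mu β η s 1 x ≤ mu β η s 1 θ := by
  have hb1 := mul_le_mul_of_nonneg_left h1 hβ.le
  have hb2 := mul_le_mul_of_nonneg_left h2 hβ.le
  have ex2 : (1:ℝ) + Real.exp (-β * x.2) = Real.exp 0 + Real.exp (-β * x.2) := by simp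
  have eθ2 : (1:ℝ) + Real.exp (-β * θ.2) = Real.exp 0 + Real.exp (-β * θ.2) := by simp
  have ex1 : η / (Real.exp (-β * x.1) + 1) = η * Real.exp 0 / (Real.exp 0 + Real.exp (-β * x.1)) := by
      rw [Real.exp_zero, mul_one, add_comm]
  have eθ1 : η / (Real.exp (-β * θ.1) + 1) = η * Real.exp 0 / (Real.exp 0 + Real.exp (-β * θ.1)) := by
      rw [Real.exp_zero, mul_one, add_comm]
  fin_cases s <;> simp only [mu]
  · rw [add_comm (Real.exp (-β * x.1)), add_comm (Real.exp (-β * θ.1))]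
    exact exp_frac_mono _ _ _ _ _ hη.le (by linarith)
  · rw [ex2, eθ2, add_comm (Real.exp 0) (Real.exp (-β * x.2)),
      add_comm (Real.exp 0) (Real.exp (-β * θ.2))]
    exact exp_frac_mono _ _ _ _ _ hη.le (by linarith)
  · rw [ex1, eθ1]; exact exp_frac_mono _ _ _ _ _ hη.le (by linarith)
  · exact le_refl _

/-- if `x_k ≥ θ_k` and `x_{3−k} ≤ θ_{3−k}`, the excess drift of link `k`
at `x` is bounded by its value at `θ`. -/
theorem stmt9 (β η : ℝ) (F : Fin 2 → ℝ) (hβ : 0 < β) (hη : 0 < η)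
    (hF : ∀ k, 0 < F k)
    (θ : ℝ × ℝ) (hθ1 : 0 ≤ θ.1) (hθ2 : 0 ≤ θ.2)
    (s : Fin 4) (k : Fin 2) (x : ℝ × ℝ) (hx1 : 0 ≤ x.1) (hx2 : 0 ≤ x.2)
    (hown : coord x k ≥ coord θ k) (hother : coord x (1 - k) ≤ coord θ (1 - k)) :
    mu β η s k x - F k * (1 - Real.exp (-coord x k)) ≤
      mu β η s k θ - F k * (1 - Real.exp (-coord θ k)) := by
  fin_cases k <;>
    simp [coord, Fin.ext_iff, show ((1:Fin 2)-0)=1 from rfl,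
      show ((1:Fin 2)-1)=0 from rfl] at hown hother ⊢
  · have hout : F 0 * (1 - Real.exp (-θ.1)) ≤ F 0 * (1 - Real.exp (-x.1)) := by
      have h1 : Real.exp (-x.1) ≤ Real.exp (-θ.1) := Real.exp_le_exp.mpr (by linarith)
      nlinarith [hF 0]
    have hmu := mu_mono0 β η hβ hη s x θ hown hother
    linarith
  · have hout : F 1 * (1 - Real.exp (-θ.2)) ≤ F 1 * (1 - Real.exp (-x.2)) := by
      have h1 : Real.exp (-x.2) ≤ Real.exp (-θ.2) := Real.exp_le_exp.mpr (by linarith)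
      nlinarith [hF 1]
    have hmu := mu_mono1 β η hβ hη s x θ hother hown
    linarith
end
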